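/- Let σ ∈ (0,2), Δx > 0, and let k ≥ 1 be an integer with y_k = kΔx. Suppose real numbers W_i^k, W_{i+1}^k, W_{i−1}^k, W_i^{k+1}, W_i^{k−1} satisfy y_k^{1−σ}(W_{i+1}^k + W_{i−1}^k + W_i^{k+1} + W_i^{k−1} − 4W_i^k)/Δx² + (1−σ) y_k^{−σ}(W_i^{k+1} − W_i^k)/Δx = 0, together with W_{i+1}^k ≤ W_i^k, W_{i−1}^k ≤ W_i^k and W_i^{k−1} ≤ W_i^k. Then W_i^{k+1} ≥ W_i^k. -/

import Mathlib

/-!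
Since `y_k ^ (-σ) = y_k ^ (1 - σ) / y_k` and `y_k = kΔx`, the scheme at the node is a positive
multiple of `k (W_{i+1} + W_{i-1} + W^{k+1} + W^{k-1} - 4 W) + (1 - σ) (W^{k+1} - W)`. Setting that
to zero gives `(k + 1 - σ) (W^{k+1} - W) = k ((W - W_{i+1}) + (W - W_{i-1}) + (W - W^{k-1})) ≥ 0`,
and `k + 1 - σ > 0`.
-/

lemma extension_scheme_eq_mul {k Δx : ℝ} (hk : 0 < k) (hΔx : 0 < Δx) (σ L D : ℝ) :
    (k * Δx) ^ (1 - σ) * L / Δx ^ 2 + (1 - σ) * (k * Δx) ^ (-σ) * D / Δx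
      = (k * Δx) ^ (1 - σ) / (k * Δx ^ 2) * (k * L + (1 - σ) * D) := by
  have hy : k * Δx ≠ 0 := by positivity
  rw [show -σ = 1 - σ - 1 by ring, Real.rpow_sub_one hy]
  field_simp

lemma le_of_extension_scheme_eq_zero {k σ W Wip Wim Wup Wdn : ℝ} (hk : 0 ≤ k)
    (hkσ : 0 < k + 1 - σ)
    (h : k * (Wip + Wim + Wup + Wdn - 4 * W) + (1 - σ) * (Wup - W) = 0)
    (h1 : Wip ≤ W) (h2 : Wim ≤ W) (h3 : Wdn ≤ W) :
    W ≤ Wup := by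
  have hsplit : (k + 1 - σ) * (Wup - W) = k * ((W - Wip) + (W - Wim) + (W - Wdn)) := by
    linear_combination h
  have hrhs : 0 ≤ k * ((W - Wip) + (W - Wim) + (W - Wdn)) := by
    apply mul_nonneg hk; linarith
  rw [← hsplit] at hrhs
  linarith [nonneg_of_mul_nonneg_right hrhs hkσ]

theorem stmt8 (σ Δx : ℝ) (hσ : σ ∈ Set.Ioo (0:ℝ) 2) (hΔx : 0 < Δx)
    (k : ℕ) (hk : 1 ≤ k) (Wik Wip Wim Wup Wdn : ℝ)
    (heq : ((k : ℝ) * Δx) ^ (1 - σ) * (Wip + Wim + Wup + Wdn - 4 * Wik) / Δx ^ 2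
        + (1 - σ) * ((k : ℝ) * Δx) ^ (-σ) * (Wup - Wik) / Δx = 0)
    (h1 : Wip ≤ Wik) (h2 : Wim ≤ Wik) (h3 : Wdn ≤ Wik) :
    Wik ≤ Wup := by
  have hk1 : (1 : ℝ) ≤ k := by exact_mod_cast hk
  have hk0 : (0 : ℝ) < k := by linarith
  rw [extension_scheme_eq_mul hk0 hΔx] at heq
  have hfactor : 0 < ((k : ℝ) * Δx) ^ (1 - σ) / (k * Δx ^ 2) := by positivity
  exact le_of_extension_scheme_eq_zero hk0.le (by linarith [hσ.2])
    ((mul_eq_zero.1 heq).resolve_left hfactor.ne') h1 h2 h3
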